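/- arXiv:1906.10097 — 2 statements merged into one kernel-verified Lean document; each statement's English description precedes it below -/
import Mathlib

section
/- Let n ≥ 1 and Q ≥ 2. Let A = (a₁,…,a_{Q−1}) and B = (b₁,…,b_{Q−1}) be (Q−1)-tuples of points of ℝⁿ, let p, q ∈ ℝⁿ, and let A_p, B_q ∈ (ℝⁿ)^Q be the Q-tuples obtained from A and B by appending p and q respectively. Then 𝒢(A, B)² ≤ 2‖p − q‖² + 5·𝒢(A_p, B_q)². -/
/-!
Take an optimal matching `σ` of `A_p` with `B_q`, of cost `𝒢(A_p, B_q)²`. If `σ` pairs `p`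
with `q`, dropping that pair leaves a matching of `A` with `B` of cost
`𝒢(A_p, B_q)² − ‖p − q‖²`. Otherwise `σ` pairs `p` with some `b` and some `a` with `q`;
re-pairing `a` with `b` and `p` with `q`, then dropping `(p, q)`, gives a matching of `A` with
`B` of cost `𝒢(A_p, B_q)² + ‖a − b‖² − ‖a − q‖² − ‖p − b‖²`. Since
`‖a − b‖ ≤ ‖a − q‖ + ‖q − p‖ + ‖p − b‖` and `(x + y + z)² ≤ 4x² + 2y² + 4z²`, this is at most
`2‖p − q‖² + 4𝒢(A_p, B_q)²`, because `‖a − q‖² + ‖p − b‖² ≤ 𝒢(A_p, B_q)²`.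
-/

/-- The metric `𝒢` on unordered `Q`-tuples of points of `ℝⁿ`: the minimum over permutations
`σ` of `(Σᵢ ‖Pᵢ − R_{σ(i)}‖²)^{1/2}`. -/
noncomputable def Gdist {n Q : ℕ} (P R : Fin Q → EuclideanSpace ℝ (Fin n)) : ℝ :=
  ⨅ σ : Equiv.Perm (Fin Q), Real.sqrt (∑ i, ‖P i - R (σ i)‖ ^ 2)

open Equiv Finset

theorem Fin.exists_perm_apply_succAbove_eq {m : ℕ} {σ : Perm (Fin (m + 1))} {p : Fin (m + 1)}
    (hσ : σ p = p) : ∃ τ : Perm (Fin m), ∀ i, σ (p.succAbove i) = p.succAbove (τ i) := by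
  let ρ : Perm { x // x ≠ p } := σ.subtypePerm fun _ => σ.injective.ne_iff' hσ
  refine ⟨(finSuccAboveEquiv p).permCongr.symm ρ, fun i => ?_⟩
  exact congrArg Subtype.val
    ((finSuccAboveEquiv p).apply_symm_apply (ρ (finSuccAboveEquiv p i))).symm

section MatchingCost

variable {ι E : Type*} [Fintype ι] [SeminormedAddCommGroup E]

noncomputable def matchingCost (P R : ι → E) (σ : Perm ι) : ℝ :=
  ∑ i, ‖P i - R (σ i)‖ ^ 2

theorem matchingCost_nonneg (P R : ι → E) (σ : Perm ι) : 0 ≤ matchingCost P R σ :=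
  sum_nonneg fun _ _ => sq_nonneg _

theorem sq_norm_add_sq_norm_le_matchingCost (P R : ι → E) (σ : Perm ι) {i j : ι}
    (hij : i ≠ j) : ‖P i - R (σ i)‖ ^ 2 + ‖P j - R (σ j)‖ ^ 2 ≤ matchingCost P R σ :=
  add_le_sum (f := fun i => ‖P i - R (σ i)‖ ^ 2) (fun _ _ => sq_nonneg _)
    (mem_univ i) (mem_univ j) hij

theorem matchingCost_mul_swap [DecidableEq ι] (P R : ι → E) (σ : Perm ι) (i j : ι) :
    matchingCost P R (σ * swap i j) + ‖P i - R (σ i)‖ ^ 2 + ‖P j - R (σ j)‖ ^ 2 =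
      matchingCost P R σ + ‖P i - R (σ j)‖ ^ 2 + ‖P j - R (σ i)‖ ^ 2 := by
  obtain rfl | hij := eq_or_ne i j
  · simp [← Perm.one_def]
  have hdiff : ∑ x, (‖P x - R ((σ * swap i j) x)‖ ^ 2 - ‖P x - R (σ x)‖ ^ 2) =
      (‖P i - R (σ j)‖ ^ 2 - ‖P i - R (σ i)‖ ^ 2) +
        (‖P j - R (σ i)‖ ^ 2 - ‖P j - R (σ j)‖ ^ 2) := by
    rw [Fintype.sum_eq_add i j hij fun x hx => by simp [swap_apply_of_ne_of_ne hx.1 hx.2]]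
    simp
  rw [sum_sub_distrib] at hdiff
  unfold matchingCost
  linarith

theorem matchingCost_snoc_of_apply_last {m : ℕ} (A B : Fin m → E) (p q : E)
    {σ : Perm (Fin (m + 1))} (hσ : σ (Fin.last m) = Fin.last m) :
    ∃ τ : Perm (Fin m),
      matchingCost (Fin.snoc A p) (Fin.snoc B q) σ = matchingCost A B τ + ‖p - q‖ ^ 2 := by
  obtain ⟨τ, hτ⟩ := Fin.exists_perm_apply_succAbove_eq hσ
  refine ⟨τ, ?_⟩
  simp only [Fin.succAbove_last] at hτ
  simp [matchingCost, Fin.sum_univ_castSucc, hτ, hσ]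

theorem exists_matchingCost_le_snoc {m : ℕ} (A B : Fin m → E) (p q : E)
    (σ : Perm (Fin (m + 1))) : ∃ τ : Perm (Fin m),
      matchingCost A B τ ≤ 2 * ‖p - q‖ ^ 2 + 4 * matchingCost (Fin.snoc A p) (Fin.snoc B q) σ := by
  set P : Fin (m + 1) → E := Fin.snoc A p
  set R : Fin (m + 1) → E := Fin.snoc B q
  have hσ0 := matchingCost_nonneg P R σ
  by_cases hσL : σ (Fin.last m) = Fin.last m
  · obtain ⟨τ, hτ⟩ := matchingCost_snoc_of_apply_last A B p q hσL
    exact ⟨τ, by linarith [sq_nonneg ‖p - q‖]⟩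
  set k := σ.symm (Fin.last m)
  have hσk : σ k = Fin.last m := σ.apply_symm_apply _
  have hkL : Fin.last m ≠ k := fun h => hσL (h ▸ hσk)
  obtain ⟨τ, hτ⟩ := matchingCost_snoc_of_apply_last A B p q (σ := σ * swap (Fin.last m) k)
    (by simp [hσk])
  refine ⟨τ, ?_⟩
  have hswap := matchingCost_mul_swap P R σ (Fin.last m) k
  have htwo := sq_norm_add_sq_norm_le_matchingCost P R σ hkL
  have hPL : P (Fin.last m) = p := Fin.snoc_last _ _
  have hRL : R (Fin.last m) = q := Fin.snoc_last _ _
  rw [hσk, hPL, hRL] at hswap htwo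
  set a := P k
  set b := R (σ (Fin.last m))
  have htri : ‖a - b‖ ≤ ‖a - q‖ + ‖p - q‖ + ‖p - b‖ := by
    linarith [norm_sub_le_norm_sub_add_norm_sub a q b, norm_sub_le_norm_sub_add_norm_sub q p b,
      norm_sub_rev q p]
  have hsq : ‖a - b‖ ^ 2 ≤ 4 * ‖a - q‖ ^ 2 + 2 * ‖p - q‖ ^ 2 + 4 * ‖p - b‖ ^ 2 := by
    nlinarith [norm_nonneg (a - b), sq_nonneg (‖a - q‖ - ‖p - b‖),
      sq_nonneg (‖p - q‖ - ‖a - q‖ - ‖p - b‖)]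
  linarith

end MatchingCost

theorem gdist_eq_iInf_sqrt_matchingCost {n Q : ℕ} (P R : Fin Q → EuclideanSpace ℝ (Fin n)) :
    Gdist P R = ⨅ σ, √(matchingCost P R σ) :=
  rfl

theorem gdist_sq_le_matchingCost {n Q : ℕ} (P R : Fin Q → EuclideanSpace ℝ (Fin n))
    (σ : Perm (Fin Q)) : Gdist P R ^ 2 ≤ matchingCost P R σ := by
  have hle : Gdist P R ≤ √(matchingCost P R σ) :=
    gdist_eq_iInf_sqrt_matchingCost P R ▸
      ciInf_le ⟨0, by rintro _ ⟨τ, rfl⟩; exact Real.sqrt_nonneg _⟩ σ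
  calc Gdist P R ^ 2 ≤ √(matchingCost P R σ) ^ 2 :=
        pow_le_pow_left₀ (Real.iInf_nonneg fun _ => Real.sqrt_nonneg _) hle 2
    _ = matchingCost P R σ := Real.sq_sqrt (matchingCost_nonneg P R σ)

theorem exists_gdist_sq_eq_matchingCost {n Q : ℕ} (P R : Fin Q → EuclideanSpace ℝ (Fin n)) :
    ∃ σ : Perm (Fin Q), Gdist P R ^ 2 = matchingCost P R σ := by
  obtain ⟨σ, hσ⟩ := exists_eq_ciInf_of_finite (f := fun σ => √(matchingCost P R σ))
  refine ⟨σ, ?_⟩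
  rw [gdist_eq_iInf_sqrt_matchingCost, ← hσ, Real.sq_sqrt (matchingCost_nonneg P R σ)]

theorem statement5_general {n Q : ℕ}
    (A B : Fin (Q - 1) → EuclideanSpace ℝ (Fin n)) (p q : EuclideanSpace ℝ (Fin n)) :
    Gdist A B ^ 2 ≤ 2 * ‖p - q‖ ^ 2 + 5 * Gdist (Fin.snoc A p) (Fin.snoc B q) ^ 2 := by
  obtain ⟨σ, hσ⟩ := exists_gdist_sq_eq_matchingCost (Fin.snoc A p) (Fin.snoc B q)
  obtain ⟨τ, hτ⟩ := exists_matchingCost_le_snoc A B p q σ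
  calc Gdist A B ^ 2 ≤ matchingCost A B τ := gdist_sq_le_matchingCost A B τ
    _ ≤ 2 * ‖p - q‖ ^ 2 + 4 * Gdist (Fin.snoc A p) (Fin.snoc B q) ^ 2 := hσ ▸ hτ
    _ ≤ 2 * ‖p - q‖ ^ 2 + 5 * Gdist (Fin.snoc A p) (Fin.snoc B q) ^ 2 := by
        linarith [sq_nonneg (Gdist (Fin.snoc A p) (Fin.snoc B q))]

/-- If `A_p`, `B_q` are the `Q`-tuples obtained from the `(Q−1)`-tuples `A`, `B` by appending
points `p`, `q` respectively, then `𝒢(A,B)² ≤ 2‖p−q‖² + 5 𝒢(A_p,B_q)²`. -/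
theorem statement5 {n Q : ℕ} (hn : 1 ≤ n) (hQ : 2 ≤ Q)
    (A B : Fin (Q - 1) → EuclideanSpace ℝ (Fin n)) (p q : EuclideanSpace ℝ (Fin n)) :
    Gdist A B ^ 2 ≤ 2 * ‖p - q‖ ^ 2 + 5 * Gdist (Fin.snoc A p) (Fin.snoc B q) ^ 2 :=
  statement5_general A B p q
end

section
/- Let n ≥ 1, α > 0, and let u : ℝ² → ℝⁿ be harmonic on all of ℝ², α-homogeneous (u(λp) = λ^α u(p) for every λ > 0 and p ∈ ℝ²), and not identically zero. Then α is a positive integer d, and there exist vectors a, b ∈ ℝⁿ, not both zero, such that u(r cos θ, r sin θ) = r^d (a cos(dθ) + b sin(dθ)) for all r ≥ 0 and θ ∈ ℝ; that is, u is a homogeneous harmonic polynomial of degree d. -/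
/-!
On the unit circle, `g θ = u (cos θ, sin θ)` solves `g'' = -α² g`. Indeed the Laplacian is
invariant under rotations, so the tangential second derivative of `u` is minus the radial one,
which Euler's identity for `α`-homogeneous functions evaluates to `α (α - 1) g`; the curvature of
the circle contributes a further `-α g`. Hence `g θ = cos (α θ) a + sin (α θ) b`, and since `g` is
`2π`-periodic with `(a, b) ≠ 0`, the number `α` is an integer. Homogeneity extends the formula
from the circle to the plane.
-/

open Real

def HarmonicOn {n : ℕ} (f : ℝ × ℝ → EuclideanSpace ℝ (Fin n)) (U : Set (ℝ × ℝ)) : Prop :=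
  ContDiffOn ℝ 2 f U ∧ ∀ x ∈ U,
    fderivWithin ℝ (fun y => fderivWithin ℝ f U y ((1 : ℝ), (0 : ℝ))) U x ((1 : ℝ), (0 : ℝ)) +
      fderivWithin ℝ (fun y => fderivWithin ℝ f U y ((0 : ℝ), (1 : ℝ))) U x ((0 : ℝ), (1 : ℝ)) = 0

section Homogeneous

variable {E F : Type*} [NormedAddCommGroup E] [NormedSpace ℝ E] [NormedAddCommGroup F]
  [NormedSpace ℝ F]

def IsPosHomogeneous (α : ℝ) (u : E → F) : Prop :=
  ∀ t : ℝ, 0 < t → ∀ x, u (t • x) = t ^ α • u x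

lemma HasDerivAt.eq_smul_of_eq_rpow_smul {f : ℝ → F} {f' v : F} {β : ℝ} (hf : HasDerivAt f f' 1)
    (heq : ∀ t, 0 < t → f t = t ^ β • v) : f' = β • v := by
  have hpow : HasDerivAt (fun t : ℝ => t ^ β • v) ((β * 1 ^ (β - 1)) • v) 1 :=
    (hasDerivAt_rpow_const (Or.inl one_ne_zero)).smul_const v
  have hf' : HasDerivAt (fun t : ℝ => t ^ β • v) f' 1 :=
    hf.congr_of_eventuallyEq <|
      Filter.eventuallyEq_of_mem (Ioi_mem_nhds one_pos) fun t ht => (heq t ht).symm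
  simpa using hf'.unique hpow

variable {α : ℝ} {u : E → F}

lemma IsPosHomogeneous.apply_zero (hu : IsPosHomogeneous α u) (hα : α ≠ 0) : u 0 = 0 := by
  have h2 : (2 : ℝ) ^ α ≠ 1 := by
    simpa [rpow_zero] using (rpow_right_inj two_pos (by norm_num : (2 : ℝ) ≠ 1) (z := 0)).not.mpr hα
  have h := hu 2 two_pos 0
  rw [smul_zero] at h
  have : ((2 : ℝ) ^ α - 1) • u 0 = 0 := by rw [sub_smul, one_smul, ← h, sub_self]
  exact (smul_eq_zero.mp this).resolve_left (sub_ne_zero.mpr h2)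

lemma hasDerivAt_comp_smul_right {f : E → F} {f' : E →L[ℝ] F} {t : ℝ} (x : E)
    (hf : HasFDerivAt f f' (t • x)) : HasDerivAt (fun s : ℝ => f (s • x)) (f' x) t :=
  hf.comp_hasDerivAt t ((hasDerivAt_id t).smul_const x) |>.congr_deriv (by simp)

lemma IsPosHomogeneous.fderiv_apply_self (hu : IsPosHomogeneous α u) {x : E}
    (hd : DifferentiableAt ℝ u x) : fderiv ℝ u x x = α • u x :=
  (hasDerivAt_comp_smul_right x (by simpa using hd.hasFDerivAt)).eq_smul_of_eq_rpow_smul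
    fun t ht => hu t ht x

lemma IsPosHomogeneous.fderiv_fderiv_apply_self (hu : IsPosHomogeneous α u)
    (hd : Differentiable ℝ u) {x : E} (hd2 : DifferentiableAt ℝ (fderiv ℝ u) x) :
    fderiv ℝ (fderiv ℝ u) x x x = (α * (α - 1)) • u x := by
  have hd2' : HasFDerivAt (fderiv ℝ u) (fderiv ℝ (fderiv ℝ u) x) ((1 : ℝ) • x) := by
    rw [one_smul]
    exact hd2.hasFDerivAt
  have hline : HasDerivAt (fun t : ℝ => fderiv ℝ u (t • x) x) (fderiv ℝ (fderiv ℝ u) x x x) 1 :=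
    ((hasDerivAt_comp_smul_right x hd2').clm_apply (hasDerivAt_const 1 x)).congr_deriv (by simp)
  rw [hline.eq_smul_of_eq_rpow_smul (β := α - 1) (v := α • u x) fun t ht => ?_, smul_smul,
    mul_comm]
  -- Euler's identity at `t • x`, divided by `t`
  apply smul_right_injective F ht.ne'
  have heuler := hu.fderiv_apply_self (hd (t • x))
  rw [map_smul, hu t ht x] at heuler
  simp only [heuler, smul_smul, rpow_sub_one ht.ne']
  congr 1
  field_simp

end Homogeneous

lemma hasDerivAt_cos_smul_add_sin_smul {E : Type*} [NormedAddCommGroup E] [NormedSpace ℝ E]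
    (ω : ℝ) (a b : E) (t : ℝ) :
    HasDerivAt (fun t => cos (ω * t) • a + sin (ω * t) • b)
      (ω • (cos (ω * t) • b + sin (ω * t) • -a)) t := by
  have hωt := (hasDerivAt_id t).const_mul ω
  refine ((hωt.cos.smul_const a).add (hωt.sin.smul_const b)).congr_deriv ?_
  simp only [id, mul_one]
  module

section HarmonicOscillator

variable {E : Type*} [NormedAddCommGroup E] [InnerProductSpace ℝ E] {ω : ℝ}

lemma eq_zero_of_harmonic_oscillator (hω : ω ≠ 0) {h h' : ℝ → E}
    (hh : ∀ t, HasDerivAt h (h' t) t) (hh' : ∀ t, HasDerivAt h' (-(ω ^ 2) • h t) t)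
    (h0 : h 0 = 0) (h0' : h' 0 = 0) (t : ℝ) : h t = 0 := by
  set energy : ℝ → ℝ := fun t => ω ^ 2 * ‖h t‖ ^ 2 + ‖h' t‖ ^ 2
  have henergy : ∀ t, HasDerivAt energy 0 t := fun t => by
    refine (((hh t).norm_sq.const_mul (ω ^ 2)).add (hh' t).norm_sq).congr_deriv ?_
    simp only [inner_smul_right, real_inner_comm (h t)]
    ring
  have hconst : energy t = energy 0 := is_const_of_deriv_eq_zero
    (fun x => (henergy x).differentiableAt) (fun x => (henergy x).deriv) t 0
  have hzero : energy t = 0 := by simp [hconst, energy, h0, h0']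
  simpa [hω] using ((add_eq_zero_iff_of_nonneg (by positivity) (by positivity)).mp hzero).1

lemma eq_cos_smul_add_sin_smul_of_harmonic_oscillator (hω : ω ≠ 0) {g g' : ℝ → E}
    (hg : ∀ t, HasDerivAt g (g' t) t) (hg' : ∀ t, HasDerivAt g' (-(ω ^ 2) • g t) t) (t : ℝ) :
    g t = cos (ω * t) • g 0 + sin (ω * t) • (ω⁻¹ • g' 0) := by
  set a := g 0
  set b := ω⁻¹ • g' 0
  have hdiff := eq_zero_of_harmonic_oscillator hω
    (h := fun t => g t - (cos (ω * t) • a + sin (ω * t) • b))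
    (h' := fun t => g' t - ω • (cos (ω * t) • b + sin (ω * t) • -a))
    (fun t => (hg t).sub (hasDerivAt_cos_smul_add_sin_smul ω a b t))
    (fun t => by
      refine ((hg' t).sub
        ((hasDerivAt_cos_smul_add_sin_smul ω b (-a) t).const_smul ω)).congr_deriv ?_
      module)
    (by simp [a]) (by simp [b, hω]) t
  exact sub_eq_zero.mp hdiff

end HarmonicOscillator

lemma exists_int_eq_of_periodic_cos_smul_add_sin_smul {M : Type*} [AddCommGroup M] [Module ℝ M]
    {ω : ℝ} {a b : M} (hab : ¬(a = 0 ∧ b = 0))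
    (hper : Function.Periodic (fun t => cos (ω * t) • a + sin (ω * t) • b) (2 * π)) :
    ∃ k : ℤ, ω = k := by
  rcases eq_or_ne ω 0 with rfl | hω
  · exact ⟨0, by simp⟩
  set C := cos (ω * (2 * π))
  set S := sin (ω * (2 * π))
  have h₀ : (C - 1) • a + S • b = 0 := by
    have := hper 0
    simp only [zero_add, mul_zero, cos_zero, sin_zero, one_smul, zero_smul, add_zero] at this
    linear_combination (norm := module) this
  -- the second relation comes from the time `π / (2ω)` at which the phase is `π / 2`
  have h₁ : (-S) • a + (C - 1) • b = 0 := by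
    have := hper (π / (2 * ω))
    have hphase : ω * (π / (2 * ω)) = π / 2 := by field_simp
    simp only [mul_add, hphase, cos_add, sin_add, cos_pi_div_two, sin_pi_div_two] at this
    linear_combination (norm := module) this
  have hdet : (C - 1) ^ 2 + S ^ 2 = 0 := by
    by_contra hne
    refine hab ⟨(smul_eq_zero.mp ?_).resolve_left hne, (smul_eq_zero.mp ?_).resolve_left hne⟩
    · linear_combination (norm := module) (C - 1) • h₀ - S • h₁
    · linear_combination (norm := module) S • h₀ + (C - 1) • h₁
  obtain ⟨k, hk⟩ := (cos_eq_one_iff _).mp (show C = 1 by nlinarith [sq_nonneg S, sq_nonneg (C - 1)])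
  exact ⟨k, (mul_right_cancel₀ (by positivity) hk).symm⟩

lemma HarmonicOn.fderiv_fderiv_add_eq_zero {n : ℕ} {u : ℝ × ℝ → EuclideanSpace ℝ (Fin n)}
    (hu : HarmonicOn u Set.univ) (x : ℝ × ℝ) :
    fderiv ℝ (fderiv ℝ u) x (1, 0) (1, 0) + fderiv ℝ (fderiv ℝ u) x (0, 1) (0, 1) = 0 := by
  have hd2 : Differentiable ℝ (fderiv ℝ u) :=
    ((contDiffOn_univ.mp hu.1).fderiv_right (m := 1) (by norm_num)).differentiable (by norm_num)
  have hpartial (v : ℝ × ℝ) :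
      fderiv ℝ (fun y => fderiv ℝ u y v) x v = fderiv ℝ (fderiv ℝ u) x v v := by
    rw [fderiv_clm_apply (hd2 x) (differentiableAt_const v)]
    simp
  simpa only [fderivWithin_univ, hpartial] using hu.2 x (Set.mem_univ x)

lemma ContinuousLinearMap.apply_diag_add_apply_diag_rotate {E : Type*} [NormedAddCommGroup E]
    [NormedSpace ℝ E] (B : ℝ × ℝ →L[ℝ] ℝ × ℝ →L[ℝ] E) (hB : ∀ v w, B v w = B w v) (c s : ℝ) :
    B (c, s) (c, s) + B (-s, c) (-s, c) =
      (c ^ 2 + s ^ 2) • (B (1, 0) (1, 0) + B (0, 1) (0, 1)) := by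
  have hcs : ((c, s) : ℝ × ℝ) = c • (1, 0) + s • (0, 1) := by simp
  have hsc : ((-s, c) : ℝ × ℝ) = (-s) • (1, 0) + c • (0, 1) := by simp
  rw [hcs, hsc]
  simp only [map_add, map_smul, add_apply, smul_apply, hB (0, 1) (1, 0)]
  module

lemma exists_eq_polar (x : ℝ × ℝ) : ∃ r, 0 ≤ r ∧ ∃ θ, x = (r * cos θ, r * sin θ) :=
  ⟨‖(⟨x.1, x.2⟩ : ℂ)‖, norm_nonneg _, Complex.arg ⟨x.1, x.2⟩, by
    rw [Complex.norm_mul_cos_arg, Complex.norm_mul_sin_arg]⟩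

section Plane

variable {E : Type*} [NormedAddCommGroup E] {u : ℝ × ℝ → E} {α : ℝ}

lemma IsPosHomogeneous.fderiv_fderiv_apply_rotate [NormedSpace ℝ E] (hhom : IsPosHomogeneous α u)
    (hu : ContDiff ℝ 2 u)
    (hlap : ∀ x, fderiv ℝ (fderiv ℝ u) x (1, 0) (1, 0) + fderiv ℝ (fderiv ℝ u) x (0, 1) (0, 1) = 0)
    (θ : ℝ) :
    fderiv ℝ (fderiv ℝ u) (cos θ, sin θ) (-sin θ, cos θ) (-sin θ, cos θ) =
      -((α * (α - 1)) • u (cos θ, sin θ)) := by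
  have hrot := (fderiv ℝ (fderiv ℝ u) (cos θ, sin θ)).apply_diag_add_apply_diag_rotate
    (hu.contDiffAt.isSymmSndFDerivAt (by simp)) (cos θ) (sin θ)
  rw [hlap, smul_zero, hhom.fderiv_fderiv_apply_self (hu.differentiable (by simp))
    ((hu.fderiv_right (m := 1) le_rfl).differentiable one_ne_zero _)] at hrot
  exact eq_neg_of_add_eq_zero_right hrot

lemma IsPosHomogeneous.apply_cos_sin [InnerProductSpace ℝ E] (hα : α ≠ 0)
    (hhom : IsPosHomogeneous α u) (hu : ContDiff ℝ 2 u)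
    (hlap : ∀ x, fderiv ℝ (fderiv ℝ u) x (1, 0) (1, 0) + fderiv ℝ (fderiv ℝ u) x (0, 1) (0, 1) = 0)
    (θ : ℝ) :
    u (cos θ, sin θ) = cos (α * θ) • u (1, 0) + sin (α * θ) • (α⁻¹ • fderiv ℝ u (1, 0) (0, 1)) := by
  have hd : Differentiable ℝ u := hu.differentiable (by simp)
  have hd2 : Differentiable ℝ (fderiv ℝ u) :=
    (hu.fderiv_right (m := 1) le_rfl).differentiable one_ne_zero
  have hp (θ : ℝ) : HasDerivAt (fun θ => (cos θ, sin θ)) (-sin θ, cos θ) θ :=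
    (hasDerivAt_cos θ).prodMk (hasDerivAt_sin θ)
  have hq (θ : ℝ) : HasDerivAt (fun θ => (-sin θ, cos θ)) (-(cos θ, sin θ)) θ :=
    ((hasDerivAt_sin θ).neg.prodMk (hasDerivAt_cos θ)).congr_deriv (by simp)
  have hg (θ : ℝ) : HasDerivAt (fun θ => u (cos θ, sin θ))
      (fderiv ℝ u (cos θ, sin θ) (-sin θ, cos θ)) θ :=
    (hd _).hasFDerivAt.comp_hasDerivAt θ (hp θ)
  have hg' (θ : ℝ) : HasDerivAt (fun θ => fderiv ℝ u (cos θ, sin θ) (-sin θ, cos θ))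
      (-(α ^ 2) • u (cos θ, sin θ)) θ := by
    refine (((hd2 _).hasFDerivAt.comp_hasDerivAt θ (hp θ)).clm_apply (hq θ)).congr_deriv ?_
    rw [Function.comp_apply, hhom.fderiv_fderiv_apply_rotate hu hlap, map_neg,
      hhom.fderiv_apply_self (hd _)]
    module
  simpa using eq_cos_smul_add_sin_smul_of_harmonic_oscillator hα hg hg' θ

end Plane

theorem statement9_general {n : ℕ} (α : ℝ) (hα : 0 < α)
    (u : ℝ × ℝ → EuclideanSpace ℝ (Fin n))
    (hharm : HarmonicOn u Set.univ)
    (hhom : ∀ lam : ℝ, 0 < lam → ∀ x : ℝ × ℝ, u (lam • x) = lam ^ α • u x)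
    (hnz : ∃ x : ℝ × ℝ, u x ≠ 0) :
    ∃ d : ℕ, 0 < d ∧ α = (d : ℝ) ∧
      ∃ a b : EuclideanSpace ℝ (Fin n), ¬(a = 0 ∧ b = 0) ∧
        ∀ r : ℝ, 0 ≤ r → ∀ θ : ℝ,
          u (r * Real.cos θ, r * Real.sin θ) =
            r ^ d • (Real.cos ((d : ℝ) * θ) • a + Real.sin ((d : ℝ) * θ) • b) := by
  set a := u (1, 0)
  set b := α⁻¹ • fderiv ℝ u (1, 0) (0, 1)
  have hcircle : ∀ θ, u (cos θ, sin θ) = cos (α * θ) • a + sin (α * θ) • b :=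
    IsPosHomogeneous.apply_cos_sin hα.ne' hhom (contDiffOn_univ.mp hharm.1)
      hharm.fderiv_fderiv_add_eq_zero
  have hpolar (r : ℝ) (hr : 0 ≤ r) (θ : ℝ) :
      u (r * cos θ, r * sin θ) = r ^ α • (cos (α * θ) • a + sin (α * θ) • b) := by
    rcases hr.eq_or_lt with rfl | hr
    · rw [zero_mul, zero_mul, zero_rpow hα.ne', zero_smul]
      exact IsPosHomogeneous.apply_zero hhom hα.ne'
    · simpa [hcircle] using hhom r hr (cos θ, sin θ)
  have hab : ¬(a = 0 ∧ b = 0) := by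
    rintro ⟨ha, hb⟩
    obtain ⟨x, hx⟩ := hnz
    obtain ⟨r, hr, θ, rfl⟩ := exists_eq_polar x
    simp [hpolar r hr θ, ha, hb] at hx
  obtain ⟨k, hk⟩ := exists_int_eq_of_periodic_cos_smul_add_sin_smul (ω := α) hab fun t => by
    simp only [← hcircle, cos_add_two_pi, sin_add_two_pi]
  lift k to ℕ using by exact_mod_cast hk ▸ hα.le
  rw [Int.cast_natCast] at hk
  refine ⟨k, by exact_mod_cast hk ▸ hα, hk, a, b, hab, fun r hr θ => ?_⟩
  rw [hpolar r hr θ, hk, rpow_natCast]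

/-- A nontrivial entire harmonic `α`-homogeneous function `u : ℝ² → ℝⁿ` is a homogeneous
harmonic polynomial: `α` is a positive integer `d` and
`u(r cos θ, r sin θ) = r^d (a cos(dθ) + b sin(dθ))` with `a`, `b` not both zero. -/
theorem statement9 {n : ℕ} (hn : 1 ≤ n) (α : ℝ) (hα : 0 < α)
    (u : ℝ × ℝ → EuclideanSpace ℝ (Fin n))
    (hharm : HarmonicOn u Set.univ)
    (hhom : ∀ lam : ℝ, 0 < lam → ∀ x : ℝ × ℝ, u (lam • x) = lam ^ α • u x)
    (hnz : ∃ x : ℝ × ℝ, u x ≠ 0) :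
    ∃ d : ℕ, 0 < d ∧ α = (d : ℝ) ∧
      ∃ a b : EuclideanSpace ℝ (Fin n), ¬(a = 0 ∧ b = 0) ∧
        ∀ r : ℝ, 0 ≤ r → ∀ θ : ℝ,
          u (r * Real.cos θ, r * Real.sin θ) =
            r ^ d • (Real.cos ((d : ℝ) * θ) • a + Real.sin ((d : ℝ) * θ) • b) :=
  statement9_general α hα u hharm hhom hnz
end
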